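/- Let (G,σ,w) be a positive-connected signed graph on |V(G)| vertices with consensus index ε₀, and let 0 < ε < ε₀. Then ∑_{i,j∈V} (w_ij⁺ − ε·w_ij⁻)·Ω_ε(i,j) = 2(|V(G)| − 1), where the sum is over all ordered pairs of vertices. -/

import Mathlib

open Matrix BigOperators

open scoped Classical

/-- Moore–Penrose pseudoinverse of a square real matrix (chosen via the
defining Penrose equations; it is unique when it exists). -/
noncomputable def pinv {n : ℕ} (A : Matrix (Fin n) (Fin n) ℝ) : Matrix (Fin n) (Fin n) ℝ :=
  if h : ∃ B : Matrix (Fin n) (Fin n) ℝ,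
      A * B * A = A ∧ B * A * B = B ∧ (A * B)ᵀ = A * B ∧ (B * A)ᵀ = B * A
  then h.choose else 0

/-- The eigenvalues of a symmetric real matrix, sorted in nondecreasing order. -/
noncomputable def sortedEigs {n : ℕ} (A : Matrix (Fin n) (Fin n) ℝ) : List ℝ :=
  if h : A.IsHermitian then (Finset.univ.val.map h.eigenvalues).sort (· ≤ ·) else []

/-- The second smallest eigenvalue (with multiplicity) of a symmetric real matrix. -/
noncomputable def secondSmallestEig {n : ℕ} (A : Matrix (Fin n) (Fin n) ℝ) : ℝ :=
  (sortedEigs A).getD 1 0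

/-- The largest eigenvalue of a symmetric real matrix. -/
noncomputable def largestEig {n : ℕ} (A : Matrix (Fin n) (Fin n) ℝ) : ℝ :=
  (sortedEigs A).getD (n - 1) 0

/-- A signed weighted graph on `n` vertices, given by the positive-part and
negative-part weight functions (an edge carries a positive weight and a sign;
`wplus i j > 0` iff `(i,j)` is a positive edge, `wminus i j > 0` iff it is a
negative edge). -/
structure SignedGraph (n : ℕ) where
  wplus : Fin n → Fin n → ℝ
  wminus : Fin n → Fin n → ℝ
  wplus_symm : ∀ i j, wplus i j = wplus j i
  wminus_symm : ∀ i j, wminus i j = wminus j i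
  wplus_nonneg : ∀ i j, 0 ≤ wplus i j
  wminus_nonneg : ∀ i j, 0 ≤ wminus i j
  wplus_diag : ∀ i, wplus i i = 0
  wminus_diag : ∀ i, wminus i i = 0
  disjoint : ∀ i j, wplus i j = 0 ∨ wminus i j = 0

namespace SignedGraph

variable {n : ℕ} (Γ : SignedGraph n)

/-- positive degree -/
noncomputable def dplus (i : Fin n) : ℝ := ∑ j, Γ.wplus i j

/-- negative degree -/
noncomputable def dminus (i : Fin n) : ℝ := ∑ j, Γ.wminus i j

/-- Laplacian of the positive subgraph -/
noncomputable def Lplus : Matrix (Fin n) (Fin n) ℝ :=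
  Matrix.of fun i j => if i = j then Γ.dplus i else -Γ.wplus i j

/-- Laplacian of the negative subgraph -/
noncomputable def Lminus : Matrix (Fin n) (Fin n) ℝ :=
  Matrix.of fun i j => if i = j then Γ.dminus i else -Γ.wminus i j

/-- the ε-repelling Laplacian `L₊ - ε L₋` -/
noncomputable def Leps (ε : ℝ) : Matrix (Fin n) (Fin n) ℝ := Γ.Lplus - ε • Γ.Lminus

/-- the positive subgraph as a simple graph -/
def posGraph : SimpleGraph (Fin n) := SimpleGraph.fromRel (fun i j => 0 < Γ.wplus i j)

/-- the negative subgraph as a simple graph -/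
def negGraph : SimpleGraph (Fin n) := SimpleGraph.fromRel (fun i j => 0 < Γ.wminus i j)

/-- the underlying simple graph -/
def underlying : SimpleGraph (Fin n) :=
  SimpleGraph.fromRel (fun i j => 0 < Γ.wplus i j + Γ.wminus i j)

/-- the signed graph is positive-connected -/
def PosConnected : Prop := Γ.posGraph.Connected

/-- the signed graph is negative-connected -/
def NegConnected : Prop := Γ.negGraph.Connected

/-- the consensus index ε₀ -/
noncomputable def consensusIndex : ℝ :=
  sSup {ε : ℝ | 0 < ε ∧ (Γ.Leps ε).PosSemidef ∧ (Γ.Leps ε).rank = n - 1}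

/-- the ε-repelling cost Ω_ε(i,j) = (e_i - e_j)ᵀ L_ε† (e_i - e_j) -/
noncomputable def cost (ε : ℝ) (i j : Fin n) : ℝ :=
  (Pi.single i 1 - Pi.single j 1) ⬝ᵥ (pinv (Γ.Leps ε)) *ᵥ (Pi.single i 1 - Pi.single j 1)

/-- the ε-repelling matrix Ω_ε -/
noncomputable def costMatrix (ε : ℝ) : Matrix (Fin n) (Fin n) ℝ :=
  Matrix.of fun i j => Γ.cost ε i j

/-- the node ε-repelling curvature, the unique solution of Ω_ε τ_ε = n·1 -/
noncomputable def tau (ε : ℝ) : Fin n → ℝ :=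
  (Γ.costMatrix ε)⁻¹ *ᵥ (fun _ => (n : ℝ))

/-- φ_ε = n · 1ᵀ Ω_ε⁻¹ 1 -/
noncomputable def phi (ε : ℝ) : ℝ :=
  (n : ℝ) * ((fun _ => (1 : ℝ)) ⬝ᵥ ((Γ.costMatrix ε)⁻¹ *ᵥ fun _ => (1 : ℝ)))

/-- the quantity Λ_ε(i,j) appearing in the edge ε-repelling curvature -/
noncomputable def Lam (ε : ℝ) (i j : Fin n) : ℝ :=
  (Γ.dminus i + Γ.dminus j)
    - (∑ k, Γ.cost ε j k * Γ.wminus i k + ∑ k, Γ.cost ε i k * Γ.wminus j k) / Γ.cost ε i j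

/-- the edge ε-repelling curvature ϑ_ε(i,j) -/
noncomputable def edgeCurv (ε : ℝ) (i j : Fin n) : ℝ :=
  2 * (Γ.tau ε i + Γ.tau ε j) / Γ.cost ε i j + (1 + ε) * Γ.Lam ε i j

end SignedGraph

/-!
Put `w = w⁺ - ε w⁻`, so that `L_ε = D - W` is the Laplacian of the symmetric weights `w`. For
every matrix `B`, expanding `(eᵢ - eⱼ)ᵀ B (eᵢ - eⱼ) = Bᵢᵢ + Bⱼⱼ - Bᵢⱼ - Bⱼᵢ` and using the symmetry
of `w` gives `∑ᵢⱼ wᵢⱼ (eᵢ - eⱼ)ᵀ B (eᵢ - eⱼ) = 2 tr(L_ε B)`. For `B = L_ε†` the Penrose equation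
`L_ε B L_ε = L_ε` makes `L_ε B` an idempotent of the same rank as `L_ε`, so its trace is
`rank L_ε`. Finally `rank L_ε = n - 1`: choosing `ε' > ε` with `L_ε' ⪰ 0`, a vector `x` with
`L_ε x = 0` has `xᵀL₊x - ε xᵀL₋x = 0 ≤ xᵀL₊x - ε' xᵀL₋x`, hence `xᵀL₋x = 0 = xᵀL₊x`, and `x` is
constant because the positive subgraph is connected.
-/

namespace Matrix

section Rank

variable {ι K : Type*} [Fintype ι] [Field K]

theorem rank_eq_card_sub_one_of_mulVec_eq_zero_iff [Nonempty ι] {A : Matrix ι ι K}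
    (hker : ∀ x, A *ᵥ x = 0 ↔ ∀ i j, x i = x j) : A.rank = Fintype.card ι - 1 := by
  have hker' : LinearMap.ker A.mulVecLin = K ∙ (fun _ => 1) := by
    ext x
    rw [LinearMap.mem_ker, mulVecLin_apply, hker, Submodule.mem_span_singleton]
    constructor
    · intro hx
      obtain ⟨i₀⟩ := ‹Nonempty ι›
      exact ⟨x i₀, funext fun j => by simp [hx i₀ j]⟩
    · rintro ⟨a, rfl⟩ i j
      rfl
  have := LinearMap.finrank_range_add_finrank_ker A.mulVecLin
  rw [hker', finrank_span_singleton (by simp [funext_iff]),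
    Module.finrank_fintype_fun_eq_card] at this
  rw [rank]
  omega

variable [DecidableEq ι]

theorem trace_eq_rank_of_isIdempotentElem {P : Matrix ι ι K} (hP : IsIdempotentElem P) :
    P.trace = P.rank := by
  have hP' : IsIdempotentElem (toLin' P) := hP.map toLinAlgEquiv'
  rw [← trace_toLin'_eq, LinearMap.IsIdempotentElem.isProj_range _ hP' |>.trace, rank]
  rfl

theorem trace_mul_eq_rank_of_mul_mul_eq {A B : Matrix ι ι K} (h : A * B * A = A) :
    (A * B).trace = A.rank := by
  have hidem : IsIdempotentElem (A * B) := by rw [IsIdempotentElem, ← Matrix.mul_assoc, h]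
  have hrank : (A * B).rank = A.rank :=
    (rank_mul_le_left A B).antisymm (by simpa only [h] using rank_mul_le_left (A * B) A)
  rw [trace_eq_rank_of_isIdempotentElem hidem, hrank]

end Rank

variable {ι : Type*} [Fintype ι] [DecidableEq ι]

theorem IsHermitian.exists_penroseInverse {A : Matrix ι ι ℝ} (hA : A.IsHermitian) :
    ∃ B : Matrix ι ι ℝ,
      A * B * A = A ∧ B * A * B = B ∧ (A * B)ᵀ = A * B ∧ (B * A)ᵀ = B * A := by
  -- `B = cfc (·⁻¹) A`; as `0⁻¹ = 0`, `x * x⁻¹ * x = x` holds on all of the spectrum.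
  -- `hsa` and `hc` discharge the side conditions of `cfc_mul`.
  have hsa : IsSelfAdjoint A := hA.isSelfAdjoint
  have hc : ContinuousOn (fun x : ℝ => x⁻¹) (spectrum ℝ A) :=
    A.finite_real_spectrum.continuousOn _
  have hA' : cfc (fun x : ℝ => x) A = A := cfc_id' ℝ A
  have hsymm : ∀ f : ℝ → ℝ, (cfc f A)ᵀ = cfc f A := fun f => by
    rw [← conjTranspose_eq_transpose_of_trivial]; exact cfc_predicate f A
  have hAB : A * cfc (fun x : ℝ => x⁻¹) A = cfc (fun x : ℝ => x * x⁻¹) A := by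
    rw [cfc_mul .., hA']
  have hBA : cfc (fun x : ℝ => x⁻¹) A * A = cfc (fun x : ℝ => x⁻¹ * x) A := by
    rw [cfc_mul .., hA']
  refine ⟨cfc (fun x : ℝ => x⁻¹) A, ?_, ?_, hAB ▸ hsymm _, hBA ▸ hsymm _⟩
  · calc A * cfc (fun x : ℝ => x⁻¹) A * A = cfc (fun x : ℝ => x * x⁻¹ * x) A := by
          rw [cfc_mul .., hAB, hA']
      _ = A := by simp only [mul_inv_mul_cancel, hA']
  · calc cfc (fun x : ℝ => x⁻¹) A * A * cfc (fun x : ℝ => x⁻¹) A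
          = cfc (fun x : ℝ => x⁻¹ * x * x⁻¹) A := by rw [cfc_mul .., hBA]
      _ = cfc (fun x : ℝ => x⁻¹) A :=
          cfc_congr fun x _ => by simpa using mul_inv_mul_cancel x⁻¹

theorem IsHermitian.mul_pinv_mul_self {n : ℕ} {A : Matrix (Fin n) (Fin n) ℝ}
    (hA : A.IsHermitian) : A * pinv A * A = A := by
  rw [pinv, dif_pos hA.exists_penroseInverse]
  exact hA.exists_penroseInverse.choose_spec.1

def weightedLaplacian {R : Type*} [AddCommGroup R] (w : ι → ι → R) : Matrix ι ι R :=
  diagonal (fun i => ∑ j, w i j) - of w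

section CommRing

variable {R : Type*} [CommRing R] {w : ι → ι → R}

theorem weightedLaplacian_apply (w : ι → ι → R) (i j : ι) :
    weightedLaplacian w i j = (if i = j then ∑ k, w i k else 0) - w i j := by
  simp [weightedLaplacian, diagonal_apply]

theorem weightedLaplacian_mulVec (w : ι → ι → R) (x : ι → R) (i : ι) :
    (weightedLaplacian w *ᵥ x) i = ∑ j, w i j * (x i - x j) := by
  rw [weightedLaplacian, sub_mulVec, Pi.sub_apply, mulVec_diagonal, Finset.sum_mul]
  simp only [mulVec, dotProduct, of_apply, mul_sub, Finset.sum_sub_distrib]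

@[simp]
theorem weightedLaplacian_mulVec_const (w : ι → ι → R) (c : R) :
    weightedLaplacian w *ᵥ (fun _ => c) = 0 := by
  ext i
  simp [weightedLaplacian_mulVec]

theorem weightedLaplacian_transpose (hw : ∀ i j, w i j = w j i) :
    (weightedLaplacian w)ᵀ = weightedLaplacian w := by
  ext i j
  simp only [transpose_apply, weightedLaplacian_apply, hw j i, eq_comm (a := j)]
  split_ifs with h
  · rw [h]
  · rfl

theorem single_sub_dotProduct_mulVec_single_sub (B : Matrix ι ι R) (i j : ι) :
    (Pi.single i 1 - Pi.single j 1) ⬝ᵥ B *ᵥ (Pi.single i 1 - Pi.single j 1)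
      = B i i + B j j - B i j - B j i := by
  simp only [mulVec_sub, sub_dotProduct, dotProduct_sub, mulVec_single_one,
    single_one_dotProduct, col_apply]
  ring

theorem sum_mul_single_sub_dotProduct_mulVec_single_sub (hw : ∀ i j, w i j = w j i)
    (B : Matrix ι ι R) :
    ∑ i, ∑ j, w i j *
        ((Pi.single i 1 - Pi.single j 1) ⬝ᵥ B *ᵥ (Pi.single i 1 - Pi.single j 1))
      = 2 * (weightedLaplacian w * B).trace := by
  have htrace : (weightedLaplacian w * B).trace = ∑ i, ∑ j, w i j * (B i i - B j i) := by
    simp [trace, mul_apply, weightedLaplacian_apply, sub_mul, ite_mul, Finset.sum_mul, mul_sub]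
  have hswap : ∑ i, ∑ j, w i j * (B j j - B i j) = ∑ i, ∑ j, w i j * (B i i - B j i) := by
    rw [Finset.sum_comm]
    simp only [hw]
  rw [htrace, two_mul]
  nth_rw 1 [← hswap]
  simp only [single_sub_dotProduct_mulVec_single_sub, ← Finset.sum_add_distrib]
  refine Finset.sum_congr rfl fun i _ => Finset.sum_congr rfl fun j _ => ?_
  ring

end CommRing

section Real

variable {w : ι → ι → ℝ}

theorem isHermitian_weightedLaplacian (hw : ∀ i j, w i j = w j i) :
    (weightedLaplacian w).IsHermitian :=
  isHermitian_iff_isSymm.mpr (weightedLaplacian_transpose hw)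

theorem dotProduct_weightedLaplacian_mulVec (hw : ∀ i j, w i j = w j i) (x : ι → ℝ) :
    x ⬝ᵥ weightedLaplacian w *ᵥ x = (∑ i, ∑ j, w i j * (x i - x j) ^ 2) / 2 := by
  have hform : x ⬝ᵥ weightedLaplacian w *ᵥ x = ∑ i, ∑ j, w i j * (x i * (x i - x j)) := by
    simp only [dotProduct, weightedLaplacian_mulVec, Finset.mul_sum]
    refine Finset.sum_congr rfl fun i _ => Finset.sum_congr rfl fun j _ => ?_
    ring
  have hswap :
      ∑ i, ∑ j, w i j * (x i * (x i - x j)) = ∑ i, ∑ j, w i j * (x j * (x j - x i)) := by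
    rw [Finset.sum_comm]
    simp only [hw]
  rw [eq_div_iff two_ne_zero, hform, mul_two]
  nth_rw 2 [hswap]
  rw [← Finset.sum_add_distrib]
  refine Finset.sum_congr rfl fun i _ => ?_
  rw [← Finset.sum_add_distrib]
  refine Finset.sum_congr rfl fun j _ => ?_
  ring

theorem posSemidef_weightedLaplacian (hw : ∀ i j, w i j = w j i) (hw₀ : ∀ i j, 0 ≤ w i j) :
    (weightedLaplacian w).PosSemidef := by
  refine posSemidef_iff_dotProduct_mulVec.mpr ⟨isHermitian_weightedLaplacian hw, fun x => ?_⟩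
  rw [star_trivial, dotProduct_weightedLaplacian_mulVec hw]
  exact div_nonneg (Finset.sum_nonneg fun i _ => Finset.sum_nonneg fun j _ =>
    mul_nonneg (hw₀ i j) (sq_nonneg _)) zero_le_two

theorem eq_of_dotProduct_weightedLaplacian_mulVec_eq_zero (hw : ∀ i j, w i j = w j i)
    (hw₀ : ∀ i j, 0 ≤ w i j) (hconn : (SimpleGraph.fromRel fun i j => 0 < w i j).Connected)
    {x : ι → ℝ} (hx : x ⬝ᵥ weightedLaplacian w *ᵥ x = 0) (i j : ι) : x i = x j := by
  have hterm_nonneg : ∀ i j, 0 ≤ w i j * (x i - x j) ^ 2 :=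
    fun i j => mul_nonneg (hw₀ i j) (sq_nonneg _)
  have hterm : ∀ i j, w i j * (x i - x j) ^ 2 = 0 := by
    rw [dotProduct_weightedLaplacian_mulVec hw, div_eq_zero_iff, or_iff_left two_ne_zero,
      Finset.sum_eq_zero_iff_of_nonneg fun i _ => Finset.sum_nonneg fun j _ => hterm_nonneg i j]
      at hx
    intro i j
    exact (Finset.sum_eq_zero_iff_of_nonneg fun j _ => hterm_nonneg i j).mp
      (hx i (Finset.mem_univ i)) j (Finset.mem_univ j)
  have hadj : ∀ {i j}, (SimpleGraph.fromRel fun i j => 0 < w i j).Adj i j → x i = x j := by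
    intro i j hij
    have hpos : 0 < w i j := by
      rw [SimpleGraph.fromRel_adj, hw j i, or_self] at hij
      exact hij.2
    have := hterm i j
    rw [mul_eq_zero, or_iff_right hpos.ne', sq_eq_zero_iff, sub_eq_zero] at this
    exact this
  obtain ⟨p⟩ := hconn.preconnected i j
  induction p with
  | nil => rfl
  | cons h _ ih => exact (hadj h).trans ih

end Real

end Matrix

namespace SignedGraph

variable {n : ℕ} (Γ : SignedGraph n)

theorem Lplus_eq_weightedLaplacian : Γ.Lplus = weightedLaplacian Γ.wplus := by
  ext i j
  rw [weightedLaplacian_apply, Lplus, of_apply, dplus]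
  split_ifs with h
  · rw [h, Γ.wplus_diag, sub_zero]
  · rw [zero_sub]

theorem Lminus_eq_weightedLaplacian : Γ.Lminus = weightedLaplacian Γ.wminus := by
  ext i j
  rw [weightedLaplacian_apply, Lminus, of_apply, dminus]
  split_ifs with h
  · rw [h, Γ.wminus_diag, sub_zero]
  · rw [zero_sub]

theorem Leps_eq_weightedLaplacian (ε : ℝ) :
    Γ.Leps ε = weightedLaplacian fun i j => Γ.wplus i j - ε * Γ.wminus i j := by
  ext i j
  simp only [Leps, Lplus_eq_weightedLaplacian, Lminus_eq_weightedLaplacian, Matrix.sub_apply,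
    Matrix.smul_apply, smul_eq_mul, weightedLaplacian_apply, Finset.sum_sub_distrib,
    ← Finset.mul_sum]
  split_ifs <;> ring

theorem signedWeight_symm (ε : ℝ) (i j : Fin n) :
    Γ.wplus i j - ε * Γ.wminus i j = Γ.wplus j i - ε * Γ.wminus j i := by
  rw [Γ.wplus_symm, Γ.wminus_symm]

theorem isHermitian_Leps (ε : ℝ) : (Γ.Leps ε).IsHermitian :=
  Γ.Leps_eq_weightedLaplacian ε ▸ isHermitian_weightedLaplacian (Γ.signedWeight_symm ε)

theorem dotProduct_Leps_mulVec (ε : ℝ) (x : Fin n → ℝ) :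
    x ⬝ᵥ Γ.Leps ε *ᵥ x = x ⬝ᵥ Γ.Lplus *ᵥ x - ε * (x ⬝ᵥ Γ.Lminus *ᵥ x) := by
  rw [Leps, sub_mulVec, dotProduct_sub, smul_mulVec, dotProduct_smul, smul_eq_mul]

theorem exists_lt_posSemidef_Leps {ε : ℝ} (hε : ε < Γ.consensusIndex) :
    ∃ ε', ε < ε' ∧ (Γ.Leps ε').PosSemidef := by
  by_cases hS : {ε : ℝ | 0 < ε ∧ (Γ.Leps ε).PosSemidef ∧ (Γ.Leps ε).rank = n - 1}.Nonempty
  · obtain ⟨ε', hε', hlt⟩ := exists_lt_of_lt_csSup hS hε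
    exact ⟨ε', hlt, hε'.2.1⟩
  · rw [consensusIndex, Set.not_nonempty_iff_eq_empty.mp hS, Real.sSup_empty] at hε
    refine ⟨0, hε, ?_⟩
    rw [Leps, zero_smul, sub_zero, Lplus_eq_weightedLaplacian]
    exact posSemidef_weightedLaplacian Γ.wplus_symm Γ.wplus_nonneg

theorem Leps_mulVec_eq_zero_iff (hpc : Γ.PosConnected) {ε ε' : ℝ} (hε : ε < ε')
    (hpsd : (Γ.Leps ε').PosSemidef) (x : Fin n → ℝ) :
    Γ.Leps ε *ᵥ x = 0 ↔ ∀ i j, x i = x j := by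
  constructor
  · intro hx
    have hplus_nonneg : 0 ≤ x ⬝ᵥ Γ.Lplus *ᵥ x := by
      rw [Lplus_eq_weightedLaplacian]
      simpa using
        (posSemidef_weightedLaplacian Γ.wplus_symm Γ.wplus_nonneg).dotProduct_mulVec_nonneg x
    have hminus_nonneg : 0 ≤ x ⬝ᵥ Γ.Lminus *ᵥ x := by
      rw [Lminus_eq_weightedLaplacian]
      simpa using
        (posSemidef_weightedLaplacian Γ.wminus_symm Γ.wminus_nonneg).dotProduct_mulVec_nonneg x
    have hzero := congrArg (x ⬝ᵥ ·) hx
    have hpsd_x := hpsd.dotProduct_mulVec_nonneg x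
    simp only [dotProduct_zero, dotProduct_Leps_mulVec, star_trivial] at hzero hpsd_x
    have hminus : x ⬝ᵥ Γ.Lminus *ᵥ x = 0 := by nlinarith
    have hplus : x ⬝ᵥ weightedLaplacian Γ.wplus *ᵥ x = 0 := by
      rw [← Lplus_eq_weightedLaplacian]
      linarith [mul_eq_zero_of_right ε hminus]
    exact eq_of_dotProduct_weightedLaplacian_mulVec_eq_zero Γ.wplus_symm Γ.wplus_nonneg hpc hplus
  · intro hx
    obtain ⟨i₀⟩ := hpc.nonempty
    rw [funext fun j => hx j i₀, Leps_eq_weightedLaplacian, weightedLaplacian_mulVec_const]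

theorem rank_Leps (hpc : Γ.PosConnected) {ε : ℝ} (hε : ε < Γ.consensusIndex) :
    (Γ.Leps ε).rank = n - 1 := by
  obtain ⟨ε', hlt, hpsd⟩ := Γ.exists_lt_posSemidef_Leps hε
  have : Nonempty (Fin n) := hpc.nonempty
  rw [rank_eq_card_sub_one_of_mulVec_eq_zero_iff (Γ.Leps_mulVec_eq_zero_iff hpc hlt hpsd),
    Fintype.card_fin]

end SignedGraph

theorem stmt14_general {n : ℕ} (Γ : SignedGraph n) (hpc : Γ.PosConnected)
    (ε : ℝ) (hε : ε < Γ.consensusIndex) :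
    ∑ i : Fin n, ∑ j : Fin n, (Γ.wplus i j - ε * Γ.wminus i j) * Γ.cost ε i j
      = 2 * ((n : ℝ) - 1) := by
  have hn : 1 ≤ n := Fin.pos_iff_nonempty.mpr hpc.nonempty
  simp only [SignedGraph.cost]
  rw [sum_mul_single_sub_dotProduct_mulVec_single_sub (Γ.signedWeight_symm ε),
    ← Γ.Leps_eq_weightedLaplacian,
    trace_mul_eq_rank_of_mul_mul_eq (Γ.isHermitian_Leps ε).mul_pinv_mul_self,
    Γ.rank_Leps hpc hε, Nat.cast_sub hn, Nat.cast_one]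

/-- ∑_{i,j} (w_ij⁺ − ε w_ij⁻) Ω_ε(i,j) = 2(|V|−1). -/
theorem stmt14 {n : ℕ} (Γ : SignedGraph n) (hpc : Γ.PosConnected)
    (ε : ℝ) (hε0 : 0 < ε) (hε : ε < Γ.consensusIndex) :
    ∑ i : Fin n, ∑ j : Fin n, (Γ.wplus i j - ε * Γ.wminus i j) * Γ.cost ε i j
      = 2 * ((n : ℝ) - 1) :=
  stmt14_general Γ hpc ε hε
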